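/- arXiv:2412.07138 — 2 statements merged into one kernel-verified Lean document; each statement's English description precedes it below -/
import Mathlib

section
/- (Proposition 1: validity of inner-layer zeroth-order cuts.) Let d : ℕ, L ≥ 0, μ > 0 and ε ≥ 0, and let φ : EuclideanSpace ℝ (Fin d) → ℝ have L-Lipschitz gradient. Fix a cut-generation point w₀ and let g := ∫ ∇φ(w₀ + μ • u) ∂γ_d(u) (the expectation of the zeroth-order gradient estimator, i.e. the gradient of the Gaussian smoothing of φ at w₀). Then every w with φ(w) = 0 satisfies the zeroth-order cut inequality φ(w₀) + ⟪g, w − w₀⟫ ≤ ((L+1)/2)·‖w − w₀‖² + (μ²/8)·L²·(d+3)³ + ε. Consequently, the original feasible region {w | φ(w) = 0} is a subset of the feasible region determined by the zeroth-order cut generated at w₀. -/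
/-!
The descent lemma for a function with `L`-Lipschitz gradient gives
`φ w₀ + ⟪∇φ w₀, w - w₀⟫ ≤ φ w + L / 2 * ‖w - w₀‖ ^ 2`, and `φ w = 0`. The smoothed gradient `g`
is within `L * |μ| * 𝔼‖u‖` of `∇φ w₀`, and `𝔼‖u‖ ≤ (1 + 𝔼‖u‖ ^ 2) / 2 = (1 + d) / 2`. Young's
inequality absorbs the cross term `⟪g - ∇φ w₀, w - w₀⟫` into
`‖w - w₀‖ ^ 2 / 2 + ‖g - ∇φ w₀‖ ^ 2 / 2`, and `(1 + d) ^ 2 ≤ (d + 3) ^ 3`.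
-/

open MeasureTheory RealInnerProductSpace

/-- The standard Gaussian measure on `EuclideanSpace ℝ (Fin d)`, i.e. the product of `d`
copies of the real standard Gaussian measure. -/
noncomputable def stdGaussian (d : ℕ) : Measure (EuclideanSpace ℝ (Fin d)) :=
  Measure.map (MeasurableEquiv.toLp 2 (Fin d → ℝ))
    (Measure.pi (fun _ : Fin d => ProbabilityTheory.gaussianReal 0 1))

lemma stdGaussian_eq (d : ℕ) :
    stdGaussian d = ProbabilityTheory.stdGaussian (EuclideanSpace ℝ (Fin d)) :=
  ProbabilityTheory.map_pi_eq_stdGaussian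

namespace ProbabilityTheory

variable {E : Type*} [NormedAddCommGroup E] [InnerProductSpace ℝ E] [FiniteDimensional ℝ E]
  [MeasurableSpace E] [BorelSpace E]

lemma integral_inner_sq_stdGaussian (x : E) :
    ∫ z, ⟪x, z⟫ ^ 2 ∂(stdGaussian E) = ‖x‖ ^ 2 := by
  have := covarianceBilin_apply IsGaussian.memLp_two_id x x (μ := stdGaussian E)
  rw [covarianceBilin_stdGaussian, innerSL_apply_apply, real_inner_self_eq_norm_sq] at this
  simpa [sq] using this.symm

lemma integral_norm_sq_stdGaussian :
    ∫ z, ‖z‖ ^ 2 ∂(stdGaussian E) = Module.finrank ℝ E := by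
  let b := stdOrthonormalBasis ℝ E
  have hint (i) : Integrable (fun z => ⟪b i, z⟫ ^ 2) (stdGaussian E) :=
    (IsGaussian.memLp_two_id.const_inner (b i)).integrable_sq
  simp_rw [← b.sum_sq_inner_right, integral_finsetSum _ fun i _ => hint i,
    integral_inner_sq_stdGaussian, b.orthonormal.1, one_pow, Finset.sum_const, Finset.card_univ,
    Fintype.card_fin, nsmul_eq_mul, mul_one]

lemma integral_norm_stdGaussian_le :
    ∫ z, ‖z‖ ∂(stdGaussian E) ≤ (1 + Module.finrank ℝ E) / 2 := by
  have hsq : Integrable (fun z : E => ‖z‖ ^ 2) (stdGaussian E) :=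
    IsGaussian.memLp_two_id.integrable_norm_pow two_ne_zero
  calc ∫ z, ‖z‖ ∂(stdGaussian E) ≤ ∫ z, (1 + ‖z‖ ^ 2) / 2 ∂(stdGaussian E) :=
        integral_mono IsGaussian.integrable_id.norm ((integrable_const 1).add hsq |>.div_const 2)
          fun z => by nlinarith [sq_nonneg (‖z‖ - 1)]
    _ = (1 + Module.finrank ℝ E) / 2 := by
        rw [integral_div, integral_add (integrable_const 1) hsq, integral_norm_sq_stdGaussian]
        simp

end ProbabilityTheory

section

variable {F : Type*} [NormedAddCommGroup F] [InnerProductSpace ℝ F] [CompleteSpace F]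

theorem abs_sub_sub_inner_gradient_le {f : F → ℝ} {K : NNReal}
    (hf : Differentiable ℝ f) (hK : LipschitzWith K (gradient f)) (x y : F) :
    |f y - f x - ⟪gradient f x, y - x⟫| ≤ K / 2 * ‖y - x‖ ^ 2 := by
  set δ := y - x
  let r : ℝ → ℝ := fun t => f (x + t • δ) - f x - t * ⟪gradient f x, δ⟫
  let r' : ℝ → ℝ := fun t => ⟪gradient f (x + t • δ) - gradient f x, δ⟫
  have hr (t : ℝ) : HasDerivAt r (r' t) t := by
    have hline : HasDerivAt (fun t : ℝ => x + t • δ) δ t := by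
      simpa using ((hasDerivAt_id t).smul_const δ).const_add x
    have hf_line := (hf (x + t • δ)).hasGradientAt.hasFDerivAt.comp_hasDerivAt t hline
    refine ((hf_line.sub_const (f x)).sub
      ((hasDerivAt_id t).mul_const ⟪gradient f x, δ⟫)).congr_deriv ?_
    simp [r', inner_sub_left]
  have hr'_le {t : ℝ} (ht : 0 ≤ t) : ‖r' t‖ ≤ K * t * ‖δ‖ ^ 2 :=
    calc ‖r' t‖ ≤ ‖gradient f (x + t • δ) - gradient f x‖ * ‖δ‖ := norm_inner_le_norm _ _
      _ ≤ K * ‖t • δ‖ * ‖δ‖ := by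
        gcongr
        simpa using hK.norm_sub_le (x + t • δ) x
      _ = K * t * ‖δ‖ ^ 2 := by rw [norm_smul, Real.norm_of_nonneg ht]; ring
  have hB (t : ℝ) : HasDerivAt (fun t : ℝ => K / 2 * t ^ 2 * ‖δ‖ ^ 2) (K * t * ‖δ‖ ^ 2) t := by
    refine (((hasDerivAt_pow 2 t).const_mul (K / 2 : ℝ)).mul_const (‖δ‖ ^ 2)).congr_deriv ?_
    push_cast
    ring
  have := image_norm_le_of_norm_deriv_right_le_deriv_boundary
    (fun t _ => (hr t).continuousAt.continuousWithinAt) (fun t _ => (hr t).hasDerivWithinAt)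
    (by simp [r]) hB (fun t ht => hr'_le ht.1) (Set.right_mem_Icc.2 zero_le_one)
  simpa [r, δ] using this

end

section

variable {F E : Type*} [NormedAddCommGroup F] [NormedSpace ℝ F] [MeasurableSpace F]
  [OpensMeasurableSpace F] [SecondCountableTopology F] [NormedAddCommGroup E] [NormedSpace ℝ E]
  [CompleteSpace E]

theorem norm_integral_comp_add_smul_sub_le {G : F → E} {K : NNReal} (hG : LipschitzWith K G)
    (ν : Measure F) [IsProbabilityMeasure ν] (hν : Integrable id ν) (x : F) (c : ℝ) :
    ‖∫ u, G (x + c • u) ∂ν - G x‖ ≤ K * |c| * ∫ u, ‖u‖ ∂ν := by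
  have hbound (u : F) : ‖G (x + c • u) - G x‖ ≤ K * |c| * ‖u‖ := by
    simpa [norm_smul, mul_assoc] using hG.norm_sub_le (x + c • u) x
  have hint : Integrable (fun u => G (x + c • u) - G x) ν :=
    (hν.norm.const_mul _).mono'
      ((hG.continuous.comp (by fun_prop)).sub continuous_const).aestronglyMeasurable
      (ae_of_all _ hbound)
  have hint' : Integrable (fun u => G (x + c • u)) ν :=
    (hint.add (integrable_const (G x))).congr (ae_of_all _ fun u => sub_add_cancel _ _)
  calc ‖∫ u, G (x + c • u) ∂ν - G x‖ = ‖∫ u, G (x + c • u) - G x ∂ν‖ := by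
        rw [integral_sub hint' (integrable_const _), integral_const, probReal_univ, one_smul]
    _ ≤ ∫ u, K * |c| * ‖u‖ ∂ν := norm_integral_le_of_norm_le (hν.norm.const_mul _)
        (ae_of_all _ hbound)
    _ = K * |c| * ∫ u, ‖u‖ ∂ν := integral_const_mul _ _

end

section

variable {F E : Type*} [NormedAddCommGroup F] [InnerProductSpace ℝ F] [FiniteDimensional ℝ F]
  [MeasurableSpace F] [BorelSpace F] [NormedAddCommGroup E] [NormedSpace ℝ E] [CompleteSpace E]

theorem norm_integral_stdGaussian_comp_add_smul_sub_le {G : F → E} {K : NNReal}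
    (hG : LipschitzWith K G) (x : F) (c : ℝ) :
    ‖∫ u, G (x + c • u) ∂(ProbabilityTheory.stdGaussian F) - G x‖ ≤
      K * |c| * ((1 + Module.finrank ℝ F) / 2) :=
  (norm_integral_comp_add_smul_sub_le hG _ ProbabilityTheory.IsGaussian.integrable_id x c).trans
    (by gcongr; exact ProbabilityTheory.integral_norm_stdGaussian_le)

end

theorem inner_zeroth_order_cut_valid_general
    (d : ℕ) (L μ ε : ℝ) (hL : 0 ≤ L) (hε : 0 ≤ ε)
    (φ : EuclideanSpace ℝ (Fin d) → ℝ)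
    (hdiff : Differentiable ℝ φ)
    (hlip : ∀ x y, ‖gradient φ x - gradient φ y‖ ≤ L * ‖x - y‖)
    (w₀ : EuclideanSpace ℝ (Fin d))
    (g : EuclideanSpace ℝ (Fin d))
    (hg : g = ∫ u, gradient φ (w₀ + μ • u) ∂(stdGaussian d)) :
    ∀ w : EuclideanSpace ℝ (Fin d), φ w = 0 →
      φ w₀ + ⟪g, w - w₀⟫ ≤
        (L + 1) / 2 * ‖w - w₀‖ ^ 2 + μ ^ 2 / 8 * L ^ 2 * ((d : ℝ) + 3) ^ 3 + ε := by
  intro w hw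
  set g₀ := gradient φ w₀
  have hK : LipschitzWith L.toNNReal (gradient φ) := LipschitzWith.of_dist_le_mul fun x y => by
    simpa only [dist_eq_norm, Real.coe_toNNReal L hL] using hlip x y
  have hdescent := neg_le_of_abs_le (abs_sub_sub_inner_gradient_le hdiff hK w₀ w)
  have hsmoothing : ‖g - g₀‖ ≤ L * |μ| * ((1 + d) / 2) := by
    simpa only [hg, stdGaussian_eq, finrank_euclideanSpace_fin, Real.coe_toNNReal L hL] using
      norm_integral_stdGaussian_comp_add_smul_sub_le hK w₀ μ
  have hcross : ⟪g - g₀, w - w₀⟫ ≤ ‖w - w₀‖ ^ 2 / 2 + ‖g - g₀‖ ^ 2 / 2 := by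
    nlinarith [real_inner_le_norm (g - g₀) (w - w₀), sq_nonneg (‖g - g₀‖ - ‖w - w₀‖)]
  have hbias : ‖g - g₀‖ ^ 2 / 2 ≤ μ ^ 2 / 8 * L ^ 2 * ((d : ℝ) + 3) ^ 3 :=
    calc _ ≤ (L * |μ| * ((1 + d) / 2)) ^ 2 / 2 := by gcongr
      _ = μ ^ 2 / 8 * L ^ 2 * (1 + d) ^ 2 := by rw [mul_pow, mul_pow, sq_abs]; ring
      _ ≤ _ := by
        have hd : (0 : ℝ) ≤ d := d.cast_nonneg
        gcongr
        nlinarith [mul_nonneg (mul_nonneg hd hd) hd, mul_nonneg hd hd]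
  have hsplit : ⟪g, w - w₀⟫ = ⟪g₀, w - w₀⟫ + ⟪g - g₀, w - w₀⟫ := by rw [inner_sub_left]; ring
  rw [hw, Real.coe_toNNReal L hL] at hdescent
  linarith

/-- **Proposition 1 (validity of inner-layer zeroth-order cuts).**
If `φ` has `L`-Lipschitz gradient, `g` is the Gaussian-smoothed gradient of `φ` at the
cut-generation point `w₀`, then every `w` with `φ w = 0` satisfies the zeroth-order cut
inequality; hence `{w | φ w = 0}` is contained in the region cut out by the cut. -/
theorem inner_zeroth_order_cut_valid
    (d : ℕ) (L μ ε : ℝ) (hL : 0 ≤ L) (hμ : 0 < μ) (hε : 0 ≤ ε)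
    (φ : EuclideanSpace ℝ (Fin d) → ℝ)
    (hdiff : Differentiable ℝ φ)
    (hlip : ∀ x y, ‖gradient φ x - gradient φ y‖ ≤ L * ‖x - y‖)
    (w₀ : EuclideanSpace ℝ (Fin d))
    (g : EuclideanSpace ℝ (Fin d))
    (hg : g = ∫ u, gradient φ (w₀ + μ • u) ∂(stdGaussian d)) :
    ∀ w : EuclideanSpace ℝ (Fin d), φ w = 0 →
      φ w₀ + ⟪g, w - w₀⟫ ≤
        (L + 1) / 2 * ‖w - w₀‖ ^ 2 + μ ^ 2 / 8 * L ^ 2 * ((d : ℝ) + 3) ^ 3 + ε :=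
  inner_zeroth_order_cut_valid_general d L μ ε hL hε φ hdiff hlip w₀ g hg
end

section
/- (Descent inequality for the consensus-variable update.) Let E and Z be real inner product spaces and let H : WithLp 2 (E × Z) → ℝ be differentiable with L-Lipschitz gradient with respect to the ℓ²-product norm ‖(e, z)‖² = ‖e‖² + ‖z‖² (L ≥ 0). Fix x, x⁺ ∈ E, z ∈ Z and η > 0. Let G_z denote the gradient at z of the function z' ↦ H(x, z'), and set z⁺ := z − η • G_z. Then H(x⁺, z⁺) ≤ H(x⁺, z) − (η − (L+1)·η²/2)·‖G_z‖² + (L²/2)·‖x⁺ − x‖². -/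
/-!
The partial gradients `z' ↦ ∂_z H (x⁺, z')` form an `L`-Lipschitz field, so the descent lemma
applies to the section `z' ↦ H (x⁺, z')`. The step is taken along `G_z = ∂_z H (x, z)` instead of
`∂_z H (x⁺, z)`; these differ by at most `L ‖x⁺ − x‖`, and Young's inequality absorbs the error
term at the price of `η²/2 ‖G_z‖²` and `L²/2 ‖x⁺ − x‖²`.
-/

open RealInnerProductSpace InnerProductSpace

theorem two_mul_real_inner_le_norm_sq_add_norm_sq {F : Type*} [NormedAddCommGroup F]
    [InnerProductSpace ℝ F] (a b : F) : 2 * ⟪a, b⟫ ≤ ‖a‖ ^ 2 + ‖b‖ ^ 2 := by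
  linarith [norm_sub_sq_real a b, sq_nonneg ‖a - b‖]

section Descent

variable {F : Type*} [NormedAddCommGroup F] [InnerProductSpace ℝ F] [CompleteSpace F]
  {f : F → ℝ} {g : F → F} {L : ℝ}

theorem HasGradientAt.hasDerivAt_comp_add_smul {x v : F} {t : ℝ}
    (h : HasGradientAt f (g (x + t • v)) (x + t • v)) :
    HasDerivAt (fun s : ℝ => f (x + s • v)) ⟪g (x + t • v), v⟫ t := by
  have hline : HasDerivAt (fun s : ℝ => x + s • v) v t := by
    simpa using ((hasDerivAt_id t).smul_const v).const_add x
  simpa [toDual_apply_apply, Function.comp_def] using h.hasFDerivAt.comp_hasDerivAt t hline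

theorem le_add_inner_add_half_mul_sq_of_lipschitz_gradient
    (hg : ∀ w, HasGradientAt f (g w) w) (hlip : ∀ w w', ‖g w - g w'‖ ≤ L * ‖w - w'‖) (x y : F) :
    f y ≤ f x + ⟪g x, y - x⟫ + L / 2 * ‖y - x‖ ^ 2 := by
  set v := y - x
  let ψ : ℝ → ℝ := fun t => f (x + t • v) - t * ⟪g x, v⟫ - L / 2 * t ^ 2 * ‖v‖ ^ 2
  have hψ : ∀ t, HasDerivAt ψ (⟪g (x + t • v) - g x, v⟫ - L * t * ‖v‖ ^ 2) t := by
    intro t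
    have := (((hg _).hasDerivAt_comp_add_smul (x := x) (v := v) (t := t)).sub
      ((hasDerivAt_id t).mul_const ⟪g x, v⟫)).sub
      (((hasDerivAt_pow 2 t).const_mul (L / 2)).mul_const (‖v‖ ^ 2))
    refine this.congr_deriv ?_
    rw [inner_sub_left]
    ring
  have hψ_nonpos : ∀ t ∈ interior (Set.Icc (0 : ℝ) 1),
      ⟪g (x + t • v) - g x, v⟫ - L * t * ‖v‖ ^ 2 ≤ 0 := by
    intro t ht
    rw [interior_Icc] at ht
    have hgt : ‖g (x + t • v) - g x‖ ≤ L * (t * ‖v‖) := by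
      simpa [norm_smul, abs_of_pos ht.1] using hlip (x + t • v) x
    nlinarith [real_inner_le_norm (g (x + t • v) - g x) v, norm_nonneg v]
  have hanti : AntitoneOn ψ (Set.Icc 0 1) :=
    antitoneOn_of_hasDerivWithinAt_nonpos (convex_Icc 0 1)
      (fun t _ => (hψ t).continuousAt.continuousWithinAt)
      (fun t _ => (hψ t).hasDerivWithinAt) hψ_nonpos
  have hψ0 : ψ 0 = f x := by simp [ψ]
  have hψ1 : ψ 1 = f y - ⟪g x, v⟫ - L / 2 * ‖v‖ ^ 2 := by simp [ψ, v]
  linarith [hanti (Set.left_mem_Icc.2 zero_le_one) (Set.right_mem_Icc.2 zero_le_one) zero_le_one]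

theorem le_sub_of_inexact_gradient_step
    (hg : ∀ w, HasGradientAt f (g w) w) (hlip : ∀ w w', ‖g w - g w'‖ ≤ L * ‖w - w'‖)
    (z G : F) (η δ : ℝ) (hG : ‖g z - G‖ ≤ δ) :
    f (z - η • G) ≤ f z - (η - (L + 1) * η ^ 2 / 2) * ‖G‖ ^ 2 + δ ^ 2 / 2 := by
  have hdesc := le_add_inner_add_half_mul_sq_of_lipschitz_gradient hg hlip z (z - η • G)
  have hstep : z - η • G - z = -(η • G) := by abel
  have hnorm : ‖η • G‖ ^ 2 = η ^ 2 * ‖G‖ ^ 2 := by rw [norm_smul, mul_pow, Real.norm_eq_abs, sq_abs]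
  have hinner : ⟪g z, -(η • G)⟫ = ⟪g z - G, -(η • G)⟫ - η * ‖G‖ ^ 2 := by
    simp only [inner_sub_left, inner_neg_right, real_inner_smul_right, real_inner_self_eq_norm_sq]
    ring
  have hyoung : 2 * ⟪g z - G, -(η • G)⟫ ≤ ‖g z - G‖ ^ 2 + ‖η • G‖ ^ 2 := by
    simpa using two_mul_real_inner_le_norm_sq_add_norm_sq (g z - G) (-(η • G))
  have hδ : ‖g z - G‖ ^ 2 ≤ δ ^ 2 := pow_le_pow_left₀ (norm_nonneg _) hG 2
  rw [hstep, norm_neg, hnorm, hinner] at hdesc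
  nlinarith

end Descent

section ProdL2

variable {𝕜 E Z : Type*} [RCLike 𝕜]
  [NormedAddCommGroup E] [InnerProductSpace 𝕜 E] [CompleteSpace E]
  [NormedAddCommGroup Z] [InnerProductSpace 𝕜 Z] [CompleteSpace Z]

theorem HasGradientAt.comp_toLp_prodMk_right {H : WithLp 2 (E × Z) → 𝕜} {G : WithLp 2 (E × Z)}
    {e : E} {z : Z} (h : HasGradientAt H G (WithLp.toLp 2 (e, z))) :
    HasGradientAt (fun z' => H (WithLp.toLp 2 (e, z'))) G.snd z := by
  have hmk : HasFDerivAt (fun z' : Z => WithLp.toLp 2 (e, z'))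
      ((WithLp.prodContinuousLinearEquiv 2 𝕜 E Z).symm.toContinuousLinearMap.comp
        (ContinuousLinearMap.inr 𝕜 E Z)) z :=
    (WithLp.prodContinuousLinearEquiv 2 𝕜 E Z).symm.hasFDerivAt.comp z
      (hasFDerivAt_prodMk_right e z)
  refine (h.hasFDerivAt.comp z hmk).congr_fderiv ?_
  ext v
  simp

end ProdL2

theorem consensus_block_descent_general
    {E Z : Type*} [NormedAddCommGroup E] [InnerProductSpace ℝ E] [CompleteSpace E]
    [NormedAddCommGroup Z] [InnerProductSpace ℝ Z] [CompleteSpace Z]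
    (L : ℝ)
    (H : WithLp 2 (E × Z) → ℝ)
    (hdiff : Differentiable ℝ H)
    (hlip : ∀ w w' : WithLp 2 (E × Z), ‖gradient H w - gradient H w'‖ ≤ L * ‖w - w'‖)
    (x xp : E) (z : Z) (η : ℝ)
    (Gz : Z)
    (hGz : HasGradientAt (fun z' : Z => H ((WithLp.equiv 2 (E × Z)).symm (x, z'))) Gz z)
    (zp : Z) (hzp : zp = z - η • Gz) :
    H ((WithLp.equiv 2 (E × Z)).symm (xp, zp)) ≤
      H ((WithLp.equiv 2 (E × Z)).symm (xp, z))
        - (η - (L + 1) * η ^ 2 / 2) * ‖Gz‖ ^ 2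
        + L ^ 2 / 2 * ‖xp - x‖ ^ 2 := by
  simp only [WithLp.equiv_symm_apply] at hGz ⊢
  have hsec : ∀ e z', HasGradientAt (fun z'' => H (WithLp.toLp 2 (e, z'')))
      (gradient H (WithLp.toLp 2 (e, z'))).snd z' :=
    fun e z' => (hdiff _).hasGradientAt.comp_toLp_prodMk_right
  have hsnd_lip : ∀ w w', ‖(gradient H w).snd - (gradient H w').snd‖ ≤ L * ‖w - w'‖ :=
    fun w w' => (WithLp.norm_snd_le E _).trans (hlip w w')
  have hsection_lip : ∀ z₁ z₂ : Z, ‖(gradient H (WithLp.toLp 2 (xp, z₁))).snd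
      - (gradient H (WithLp.toLp 2 (xp, z₂))).snd‖ ≤ L * ‖z₁ - z₂‖ := fun z₁ z₂ => by
    simpa [← WithLp.toLp_sub] using hsnd_lip (WithLp.toLp 2 (xp, z₁)) (WithLp.toLp 2 (xp, z₂))
  have hcross : ‖(gradient H (WithLp.toLp 2 (xp, z))).snd - Gz‖ ≤ L * ‖xp - x‖ := by
    rw [hGz.unique (hsec x z)]
    simpa [← WithLp.toLp_sub] using hsnd_lip (WithLp.toLp 2 (xp, z)) (WithLp.toLp 2 (x, z))
  calc H (WithLp.toLp 2 (xp, zp))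
      ≤ H (WithLp.toLp 2 (xp, z)) - (η - (L + 1) * η ^ 2 / 2) * ‖Gz‖ ^ 2
        + (L * ‖xp - x‖) ^ 2 / 2 :=
        hzp ▸ le_sub_of_inexact_gradient_step (hsec xp) hsection_lip z Gz η _ hcross
    _ = _ := by ring

/-- **Descent inequality for the consensus-variable update.**
Let `H` be differentiable with `L`-Lipschitz gradient on the ℓ²-product `WithLp 2 (E × Z)`.
If `G_z` is the gradient at `z` of the section `z' ↦ H (x, z')` and
`z⁺ = z − η • G_z`, then
`H (x⁺, z⁺) ≤ H (x⁺, z) − (η − (L+1)η²/2)‖G_z‖² + (L²/2)‖x⁺ − x‖²`. -/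
theorem consensus_block_descent
    {E Z : Type*} [NormedAddCommGroup E] [InnerProductSpace ℝ E] [CompleteSpace E]
    [NormedAddCommGroup Z] [InnerProductSpace ℝ Z] [CompleteSpace Z]
    (L : ℝ) (hL : 0 ≤ L)
    (H : WithLp 2 (E × Z) → ℝ)
    (hdiff : Differentiable ℝ H)
    (hlip : ∀ w w' : WithLp 2 (E × Z), ‖gradient H w - gradient H w'‖ ≤ L * ‖w - w'‖)
    (x xp : E) (z : Z) (η : ℝ) (hη : 0 < η)
    (Gz : Z)
    (hGz : HasGradientAt (fun z' : Z => H ((WithLp.equiv 2 (E × Z)).symm (x, z'))) Gz z)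
    (zp : Z) (hzp : zp = z - η • Gz) :
    H ((WithLp.equiv 2 (E × Z)).symm (xp, zp)) ≤
      H ((WithLp.equiv 2 (E × Z)).symm (xp, z))
        - (η - (L + 1) * η ^ 2 / 2) * ‖Gz‖ ^ 2
        + L ^ 2 / 2 * ‖xp - x‖ ^ 2 :=
  consensus_block_descent_general L H hdiff hlip x xp z η Gz hGz zp hzp
end
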